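/- arXiv:2103.15333 — 4 statements merged into one kernel-verified Lean document; each statement's English description precedes it below -/
import Mathlib

section
/- Let L be a real n×n matrix with nonpositive off-diagonal entries and zero row sums, and let D, M be diagonal matrices with positive diagonal entries. Then every nonzero real eigenvalue λ of the block matrix J = [[0, I], [-M⁻¹L, -M⁻¹D]] is negative. -/
/-!
Write an eigenvector of `J` as `(x, y)`. Then `y = λx` and `(L + λD + λ²M) x = 0`. Take `i` with
`|xᵢ|` maximal. Because row `i` of `L` sums to zero and has nonpositive off-diagonal entries,
`xᵢ (Lx)ᵢ = ∑ⱼ Lᵢⱼ (xᵢxⱼ - xᵢ²) ≥ 0`. So row `i` of the pencil equation gives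
`λ (dᵢ + λ mᵢ) xᵢ² ≤ 0`, which is impossible for `λ > 0`.
-/

open Matrix

theorem Matrix.pencil_mulVec_eq_zero_of_fromBlocks_mulVec_eq_smul {R n : Type*} [CommRing R]
    [Fintype n] [DecidableEq n] {M L D : Matrix n n R} (hM : IsUnit M.det) {v : n ⊕ n → R}
    {lam : R} (h : fromBlocks 0 1 (-(M⁻¹ * L)) (-(M⁻¹ * D)) *ᵥ v = lam • v) :
    v ∘ Sum.inr = lam • (v ∘ Sum.inl) ∧ (L + lam • D + lam ^ 2 • M) *ᵥ (v ∘ Sum.inl) = 0 := by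
  rw [fromBlocks_mulVec] at h
  have hy : v ∘ Sum.inr = lam • (v ∘ Sum.inl) := by
    simpa [Pi.smul_comp] using congrArg (· ∘ Sum.inl) h
  have hx : -(M⁻¹ * L) *ᵥ (v ∘ Sum.inl) + -(M⁻¹ * D) *ᵥ (v ∘ Sum.inr) = lam • (v ∘ Sum.inr) := by
    simpa [Pi.smul_comp] using congrArg (· ∘ Sum.inr) h
  refine ⟨hy, ?_⟩
  have hMx := congrArg (M *ᵥ ·) hx
  simp only [hy, neg_mulVec, mulVec_smul, mulVec_add, mulVec_neg, mulVec_mulVec,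
    mul_nonsing_inv_cancel_left _ _ hM] at hMx
  simp only [add_mulVec, smul_mulVec, pow_two, mul_smul]
  linear_combination (norm := module) -hMx

theorem Matrix.mul_mulVec_apply_nonneg_of_abs_le {R ι : Type*} [CommRing R] [LinearOrder R]
    [IsStrictOrderedRing R] [Fintype ι] {L : Matrix ι ι R} {x : ι → R} {i : ι}
    (hrow : ∑ j, L i j = 0) (hoff : ∀ j, j ≠ i → L i j ≤ 0) (hmax : ∀ j, |x j| ≤ |x i|) :
    0 ≤ x i * (L *ᵥ x) i := by
  have hsum : x i * (L *ᵥ x) i = ∑ j, L i j * (x i * x j - x i ^ 2) := by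
    simp only [mulVec, dotProduct, Finset.mul_sum, mul_sub, Finset.sum_sub_distrib,
      ← Finset.sum_mul, hrow, zero_mul, sub_zero]
    exact Finset.sum_congr rfl fun j _ => by ring
  rw [hsum]
  refine Finset.sum_nonneg fun j _ => ?_
  rcases eq_or_ne j i with rfl | hji
  · simp [sq]
  · have hprod : x i * x j ≤ x i ^ 2 :=
      calc x i * x j ≤ |x i| * |x j| := by rw [← abs_mul]; exact le_abs_self _
        _ ≤ |x i| * |x i| := mul_le_mul_of_nonneg_left (hmax j) (abs_nonneg _)
        _ = x i ^ 2 := by rw [← sq, sq_abs]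
    exact mul_nonneg_of_nonpos_of_nonpos (hoff j hji) (sub_nonpos.mpr hprod)

theorem exists_ne_zero_forall_abs_le {R ι : Type*} [AddCommGroup R] [LinearOrder R]
    [IsOrderedAddMonoid R] [Finite ι] {x : ι → R} (hx : x ≠ 0) : ∃ i, x i ≠ 0 ∧ ∀ j, |x j| ≤ |x i| := by
  obtain ⟨j, hj⟩ := Function.ne_iff.mp hx
  have : Nonempty ι := ⟨j⟩
  obtain ⟨i, hmax⟩ := Finite.exists_max fun k => |x k|
  refine ⟨i, fun hi => hj (abs_nonpos_iff.mp ?_), hmax⟩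
  simpa [hi] using hmax j

/-- Every nonzero real eigenvalue of `J = [[0, I], [-M⁻¹L, -M⁻¹D]]` is negative, when `L`
has zero row sums and nonpositive off-diagonal entries and `D, M` are positive diagonal. -/
theorem nonzero_real_eigenvalue_negative
    {n : ℕ} (L : Matrix (Fin n) (Fin n) ℝ) (d m : Fin n → ℝ)
    (hrow : L *ᵥ (fun _ => (1 : ℝ)) = 0)
    (hoff : ∀ i j, i ≠ j → L i j ≤ 0)
    (hd : ∀ i, 0 < d i) (hm : ∀ i, 0 < m i)
    (lam : ℝ) (hlam0 : lam ≠ 0)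
    (heig : ∃ v : (Fin n ⊕ Fin n) → ℝ, v ≠ 0 ∧
      (Matrix.fromBlocks (0 : Matrix (Fin n) (Fin n) ℝ) (1 : Matrix (Fin n) (Fin n) ℝ)
        (-((Matrix.diagonal m)⁻¹ * L)) (-((Matrix.diagonal m)⁻¹ * Matrix.diagonal d)))
        *ᵥ v = lam • v) :
    lam < 0 := by
  obtain ⟨v, hv, hJ⟩ := heig
  have hM : IsUnit (diagonal m).det := by
    simpa [det_diagonal, Finset.prod_ne_zero_iff] using fun i => (hm i).ne'
  obtain ⟨hy, hpencil⟩ := pencil_mulVec_eq_zero_of_fromBlocks_mulVec_eq_smul hM hJ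
  set x := v ∘ Sum.inl
  have hx : x ≠ 0 := by
    rintro hx
    rw [hx, smul_zero] at hy
    exact hv (funext (Sum.rec (congrFun hx) (congrFun hy)))
  obtain ⟨i, hxi, hmax⟩ := exists_ne_zero_forall_abs_le hx
  have hrow_i : ∑ j, L i j = 0 := by simpa [mulVec, dotProduct] using congrFun hrow i
  have hLx := mul_mulVec_apply_nonneg_of_abs_le hrow_i (fun j hj => hoff i j hj.symm) hmax
  have hpencil_i : (L *ᵥ x) i = -(lam * (d i + lam * m i)) * x i := by
    have := congrFun hpencil i
    simp only [add_mulVec, smul_mulVec, mulVec_diagonal, Pi.add_apply, Pi.smul_apply,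
      smul_eq_mul, Pi.zero_apply] at this
    linear_combination this
  by_contra! hlam
  have hlam_pos : 0 < lam := lt_of_le_of_ne hlam hlam0.symm
  have hpos : 0 < lam * (d i + lam * m i) * x i ^ 2 := by
    have := hd i; have := hm i; positivity
  rw [hpencil_i] at hLx
  linarith [show x i * (-(lam * (d i + lam * m i)) * x i) = -(lam * (d i + lam * m i) * x i ^ 2)
    by ring]
end

section
/- Let λ ∈ ℂ with Re(λ) > 0 and let d, m, ℓ be reals with d, m > 0 and ℓ ≥ 0. If ℓ ≤ d²/(2m), then |ℓ + λ d + λ² m| > ℓ. -/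
/-!
Write `p(x) = ℓ + d x + m x²` and `λ = a + i b`. Expanding,
`|p(λ)|² = p(a)² + b² ((d² - 2mℓ) + 2am(d + am)) + b⁴ m²`,
and the certificate `2mℓ ≤ d²` makes the middle coefficient nonnegative, so `|p(λ)| ≥ p(a)`.
Since `a > 0`, `p(a) > p(0) = ℓ`.
-/

namespace Complex

theorem normSq_real_quadratic (lam : ℂ) (l d m : ℝ) :
    normSq ((l : ℂ) + lam * d + lam ^ 2 * m) =
      (l + lam.re * d + lam.re ^ 2 * m) ^ 2
        + lam.im ^ 2 * ((d ^ 2 - 2 * m * l) + 2 * m * lam.re * (d + m * lam.re))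
        + lam.im ^ 4 * m ^ 2 := by
  simp only [normSq_apply, add_re, add_im, mul_re, mul_im, ofReal_re, ofReal_im, sq]
  ring

theorem real_quadratic_at_re_le_norm {lam : ℂ} {l d m : ℝ} (hre : 0 ≤ lam.re)
    (hd : 0 ≤ d) (hm : 0 ≤ m) (hcert : 2 * m * l ≤ d ^ 2) :
    l + lam.re * d + lam.re ^ 2 * m ≤ ‖(l : ℂ) + lam * d + lam ^ 2 * m‖ := by
  have hsq : (l + lam.re * d + lam.re ^ 2 * m) ^ 2 ≤ ‖(l : ℂ) + lam * d + lam ^ 2 * m‖ ^ 2 := by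
    rw [← normSq_eq_norm_sq, normSq_real_quadratic]
    have hcoeff : 0 ≤ (d ^ 2 - 2 * m * l) + 2 * m * lam.re * (d + m * lam.re) :=
      add_nonneg (sub_nonneg.mpr hcert) (by positivity)
    exact le_add_of_le_of_nonneg (le_add_of_nonneg_right (mul_nonneg (sq_nonneg _) hcoeff))
      (by positivity)
  exact (le_abs_self _).trans (abs_le_of_sq_le_sq hsq (norm_nonneg _))

end Complex

theorem certificate_core_inequality_general
    (lam : ℂ) (hre : 0 < lam.re)
    (d m l : ℝ) (hd : 0 < d) (hm : 0 < m)
    (hcert : l ≤ d ^ 2 / (2 * m)) :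
    ‖(l : ℂ) + lam * d + lam ^ 2 * m‖ > l := by
  have hcert' : 2 * m * l ≤ d ^ 2 := by
    rwa [le_div_iff₀ (by positivity), mul_comm] at hcert
  have hgain : 0 < lam.re * d + lam.re ^ 2 * m := by positivity
  calc l < l + lam.re * d + lam.re ^ 2 * m := by linarith
    _ ≤ _ := Complex.real_quadratic_at_re_le_norm hre.le hd.le hm.le hcert'

/-- Core scalar inequality of the distributed stability certificate: if `Re λ > 0`,
`d, m > 0`, `0 ≤ ℓ ≤ d²/(2m)`, then `|ℓ + λ d + λ² m| > ℓ`. -/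
theorem certificate_core_inequality
    (lam : ℂ) (hre : 0 < lam.re)
    (d m l : ℝ) (hd : 0 < d) (hm : 0 < m) (hl : 0 ≤ l)
    (hcert : l ≤ d ^ 2 / (2 * m)) :
    ‖(l : ℂ) + lam * d + lam ^ 2 * m‖ > l :=
  certificate_core_inequality_general lam hre d m l hd hm hcert
end

section
/- Let L be a real n×n matrix with zero row sums and nonpositive off-diagonal entries, and D = diag(d_i), M = diag(m_i) with d_i, m_i > 0. If for every index i one has L_{ii} ≤ d_i²/(2m_i), then every eigenvalue λ of the block matrix J = [[0, I], [-M⁻¹L, -M⁻¹D]] satisfies Re(λ) ≤ 0. -/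
open Matrix

/-!
An eigenvector `(x, y)` of `J` for `λ` has `y = λ x` and `(L + λ D + λ² M) x = 0`, so `λ` is a
singular point of the quadratic pencil. If `Re λ > 0`, the certificate makes the pencil strictly
diagonally dominant: its off-diagonal row sums are `∑_{j ≠ i} |L i j| = L i i`, while
`|m λ² + d λ + c|² - c² = (m a² + d a + m b²)² + 2 c (m a² + d a) + b² (d² - 2 m c) > 0` for
`λ = a + b i`, `a > 0`, `0 ≤ c ≤ d² / (2 m)`. By Gershgorin the pencil is then nonsingular.
-/

theorem lt_norm_quadratic_of_re_pos {m d c : ℝ} (hm : 0 < m) (hd : 0 ≤ d) (hc : 0 ≤ c)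
    (hcd : c ≤ d ^ 2 / (2 * m)) {z : ℂ} (hz : 0 < z.re) :
    c < ‖(m : ℂ) * z ^ 2 + d * z + c‖ := by
  have hcd2 : 0 ≤ d ^ 2 - 2 * m * c := by
    rw [le_div_iff₀ (by positivity)] at hcd; linarith
  set a := z.re
  set b := z.im
  have hnormSq : ‖(m : ℂ) * z ^ 2 + d * z + c‖ ^ 2 - c ^ 2 =
      (m * a ^ 2 + d * a + m * b ^ 2) ^ 2 + 2 * c * (m * a ^ 2 + d * a)
        + b ^ 2 * (d ^ 2 - 2 * m * c) := by
    rw [Complex.sq_norm, Complex.normSq_apply]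
    simp only [pow_two, Complex.add_re, Complex.add_im, Complex.mul_re, Complex.mul_im,
      Complex.ofReal_re, Complex.ofReal_im]
    ring
  refine lt_of_pow_lt_pow_left₀ 2 (norm_nonneg _) (sub_pos.1 ?_)
  rw [hnormSq]
  positivity

section

variable {n : Type*} [Fintype n] [DecidableEq n]

theorem sum_abs_offDiag_eq_diag {R : Type*} [Ring R] [LinearOrder R] [IsOrderedRing R]
    {L : Matrix n n R} (hrow : L *ᵥ (fun _ => 1) = 0)
    (hoff : ∀ i j, i ≠ j → L i j ≤ 0) (i : n) :
    ∑ j ∈ Finset.univ.erase i, |L i j| = L i i := by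
  have hsum : ∑ j, L i j = 0 := by simpa [mulVec, dotProduct] using congrFun hrow i
  rw [← Finset.add_sum_erase _ _ (Finset.mem_univ i)] at hsum
  rw [Finset.sum_congr rfl fun j hj => abs_of_nonpos (hoff i j (Finset.ne_of_mem_erase hj).symm),
    Finset.sum_neg_distrib]
  exact neg_eq_of_add_eq_zero_left hsum

def quadraticPencil {R : Type*} [CommRing R] (K D M : Matrix n n R) (z : R) : Matrix n n R :=
  K + z • D + z ^ 2 • M

theorem det_quadraticPencil_eq_zero {R : Type*} [CommRing R] [IsDomain R]
    {K D M N : Matrix n n R} (hMN : M * N = 1) {z : R} {v : n ⊕ n → R} (hv0 : v ≠ 0)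
    (hv : fromBlocks 0 1 (-(N * K)) (-(N * D)) *ᵥ v = z • v) :
    (quadraticPencil K D M z).det = 0 := by
  set x := v ∘ Sum.inl
  rw [fromBlocks_mulVec] at hv
  have hy : v ∘ Sum.inr = z • x := by
    simpa [Pi.smul_comp] using congrArg (· ∘ Sum.inl) hv
  have hx : -(N * K) *ᵥ x + -(N * D) *ᵥ (z • x) = z • z • x := by
    simpa [Pi.smul_comp, hy] using congrArg (· ∘ Sum.inr) hv
  have hMx := congrArg (M *ᵥ ·) hx
  simp only [neg_mulVec, mulVec_neg, mulVec_smul, mulVec_add, mulVec_mulVec, ← mul_assoc, hMN,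
    one_mul] at hMx
  refine exists_mulVec_eq_zero_iff.1 ⟨x, fun hx0 => hv0 ?_, ?_⟩
  · rw [hx0, smul_zero] at hy
    ext (i | i)
    · exact congrFun hx0 i
    · exact congrFun hy i
  · rw [quadraticPencil, add_mulVec, add_mulVec, smul_mulVec, smul_mulVec]
    linear_combination (norm := module) -hMx

theorem det_quadraticPencil_ne_zero {L : Matrix n n ℝ} {d m : n → ℝ}
    (hrow : L *ᵥ (fun _ => 1) = 0) (hoff : ∀ i j, i ≠ j → L i j ≤ 0)
    (hd : ∀ i, 0 ≤ d i) (hm : ∀ i, 0 < m i) (hcert : ∀ i, L i i ≤ d i ^ 2 / (2 * m i))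
    {z : ℂ} (hz : 0 < z.re) :
    (quadraticPencil (L.map (↑)) ((diagonal d).map (↑)) ((diagonal m).map (↑)) z).det ≠ 0 := by
  refine det_ne_zero_of_sum_row_lt_diag fun k => ?_
  have hdiag := sum_abs_offDiag_eq_diag hrow hoff k
  have hLkk : 0 ≤ L k k := hdiag ▸ Finset.sum_nonneg fun j _ => abs_nonneg _
  have hoffDiag : ∀ j ∈ Finset.univ.erase k,
      ‖quadraticPencil (L.map (↑)) ((diagonal d).map (↑)) ((diagonal m).map (↑)) z k j‖
        = |L k j| := fun j hj => by
    simp [quadraticPencil, diagonal_apply_ne _ (Finset.ne_of_mem_erase hj).symm]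
  have hDiag : quadraticPencil (L.map (↑)) ((diagonal d).map (↑)) ((diagonal m).map (↑)) z k k
      = m k * z ^ 2 + d k * z + L k k := by
    simp only [quadraticPencil, Matrix.add_apply, Matrix.smul_apply, map_apply,
      diagonal_apply_eq, smul_eq_mul]
    ring
  rw [Finset.sum_congr rfl hoffDiag, hdiag, hDiag]
  exact lt_norm_quadratic_of_re_pos (hm k) (hd k) hLkk (hcert k) hz

end

/-- Matrix form of the stability certificate: if `L` has zero row sums and nonpositive
off-diagonal entries and `L i i ≤ d i² / (2 m i)` for all `i`, then every eigenvalue of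
`J = [[0, I], [-M⁻¹L, -M⁻¹D]]` has nonpositive real part. -/
theorem stability_certificate_matrix
    {n : ℕ} (L : Matrix (Fin n) (Fin n) ℝ) (d m : Fin n → ℝ)
    (hrow : L *ᵥ (fun _ => (1 : ℝ)) = 0)
    (hoff : ∀ i j, i ≠ j → L i j ≤ 0)
    (hd : ∀ i, 0 < d i) (hm : ∀ i, 0 < m i)
    (hcert : ∀ i, L i i ≤ (d i) ^ 2 / (2 * m i))
    (lam : ℂ)
    (heig : ∃ v : (Fin n ⊕ Fin n) → ℂ, v ≠ 0 ∧
      ((Matrix.fromBlocks (0 : Matrix (Fin n) (Fin n) ℝ) (1 : Matrix (Fin n) (Fin n) ℝ)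
        (-((Matrix.diagonal m)⁻¹ * L)) (-((Matrix.diagonal m)⁻¹ * Matrix.diagonal d))).map
          Complex.ofReal) *ᵥ v = lam • v) :
    lam.re ≤ 0 := by
  by_contra! hlam
  obtain ⟨v, hv0, hv⟩ := heig
  have hM : IsUnit (diagonal m) := isUnit_diagonal.2 (Pi.isUnit_iff.2 fun i => (hm i).ne'.isUnit)
  have hMN : Complex.ofRealHom.mapMatrix (diagonal m) *
      Complex.ofRealHom.mapMatrix (diagonal m)⁻¹ = 1 := by
    rw [← map_mul, mul_nonsing_inv _ ((isUnit_iff_isUnit_det _).1 hM), map_one]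
  rw [show (Complex.ofReal : ℝ → ℂ) = Complex.ofRealHom from rfl, fromBlocks_map] at hv
  simp only [← RingHom.mapMatrix_apply, map_neg, map_mul, map_zero, map_one] at hv
  exact det_quadraticPencil_ne_zero hrow hoff (fun i => (hd i).le) hm hcert hlam
    (det_quadraticPencil_eq_zero hMN hv0 hv)
end

section
/- For the linear system M ẍ + D ẋ + L x = 0 with M, D diagonal positive and L symmetric positive semidefinite with one-dimensional kernel spanned by 𝟙, every eigenvalue of the associated first-order system is either 0 (simple, from the translational mode) or has strictly negative real part. -/
/-!
An eigenvector `(x, y)` of the first-order system has `y = λ x` and solves the quadratic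
eigenvalue problem `(L + λ D + λ² M) x = 0` with `x ≠ 0`. Pairing with `x` gives
`a + λ b + λ² c = 0` for `a = x*Lx ≥ 0` and `b = x*Dx, c = x*Mx > 0`: a real root
cannot be positive since all coefficients are nonnegative, and a non-real root has real part
`-b / (2c) < 0`. At `λ = 0` the same reduction turns `J (x, y) = 0` into `y = 0` and `L x = 0`.
-/

open Matrix ComplexOrder

open scoped MatrixOrder in
theorem Matrix.PosSemidef.map_ofReal {ι : Type*} [Fintype ι] {L : Matrix ι ι ℝ}
    (hL : L.PosSemidef) : (L.map Complex.ofReal).PosSemidef := by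
  classical
  obtain ⟨S, rfl⟩ : ∃ S : Matrix ι ι ℝ, L = Sᴴ * S :=
    ⟨CFC.sqrt L, by
      rw [← star_eq_conjTranspose, (CFC.sqrt_nonneg L).isSelfAdjoint.star_eq,
        CFC.sqrt_mul_sqrt_self L hL.nonneg]⟩
  change ((Sᴴ * S).map Complex.ofRealHom).PosSemidef
  rw [Matrix.map_mul,
    Matrix.conjTranspose_map (⇑Complex.ofRealHom) fun a => (Complex.conj_ofReal a).symm]
  exact posSemidef_conjTranspose_mul_self _

theorem Complex.eq_zero_or_re_neg_of_quadratic_eq_zero {a b c μ : ℂ} (ha : 0 ≤ a)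
    (hb : 0 < b) (hc : 0 < c) (h : a + μ * b + μ ^ 2 * c = 0) : μ = 0 ∨ μ.re < 0 := by
  obtain ⟨ha, ha'⟩ := Complex.nonneg_iff.mp ha
  obtain ⟨hb, hb'⟩ := Complex.pos_iff.mp hb
  obtain ⟨hc, hc'⟩ := Complex.pos_iff.mp hc
  have hre := congrArg Complex.re h
  have him := congrArg Complex.im h
  simp only [pow_two, Complex.add_re, Complex.add_im, Complex.mul_re, Complex.mul_im,
    ← ha', ← hb', ← hc', Complex.zero_re, Complex.zero_im] at hre him
  rcases eq_or_ne μ.im 0 with him0 | him0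
  · rcases lt_trichotomy μ.re 0 with hneg | hzero | hpos
    · exact .inr hneg
    · exact .inl (Complex.ext hzero him0)
    · rw [him0] at hre
      nlinarith [mul_pos hpos hb, mul_pos (mul_pos hpos hpos) hc]
  · have hfac : μ.im * (b.re + 2 * c.re * μ.re) = 0 := by linear_combination him
    have hvertex : b.re + 2 * c.re * μ.re = 0 := (mul_eq_zero.mp hfac).resolve_left him0
    exact .inr (by nlinarith)

theorem eq_zero_or_re_neg_of_quadratic_eigenvector {ι : Type*} [Fintype ι]
    {L D M : Matrix ι ι ℂ} (hL : L.PosSemidef) (hD : D.PosDef) (hM : M.PosDef) {μ : ℂ}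
    {x : ι → ℂ} (hx : x ≠ 0) (h : L *ᵥ x + μ • D *ᵥ x + μ ^ 2 • M *ᵥ x = 0) :
    μ = 0 ∨ μ.re < 0 := by
  refine Complex.eq_zero_or_re_neg_of_quadratic_eq_zero (hL.dotProduct_mulVec_nonneg x)
    (hD.dotProduct_mulVec_pos hx) (hM.dotProduct_mulVec_pos hx) ?_
  simpa only [dotProduct_add, dotProduct_smul, smul_eq_mul, dotProduct_zero] using
    congrArg (star x ⬝ᵥ ·) h

theorem Matrix.fromBlocks_companion_eigenvector {R ι : Type*} [CommRing R] [Fintype ι]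
    [DecidableEq ι] {L D M N : Matrix ι ι R} (hMN : M * N = 1) {μ : R} {x y : ι → R}
    (h : fromBlocks 0 1 (-(N * L)) (-(N * D)) *ᵥ Sum.elim x y = μ • Sum.elim x y) :
    y = μ • x ∧ L *ᵥ x + μ • D *ᵥ x + μ ^ 2 • M *ᵥ x = 0 := by
  rw [fromBlocks_mulVec] at h
  have hy : y = μ • x := funext fun i => by simpa using congrFun h (Sum.inl i)
  have h₂ : -(N * L) *ᵥ x + -(N * D) *ᵥ y = μ • y :=
    funext fun i => by simpa using congrFun h (Sum.inr i)
  refine ⟨hy, ?_⟩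
  have := congrArg (M *ᵥ ·) h₂
  simp only [mulVec_add, neg_mulVec, mulVec_neg, mulVec_mulVec, ← mul_assoc, hMN, one_mul,
    mulVec_smul, hy] at this
  rw [pow_two, mul_smul]
  linear_combination (norm := module) -this

/-- For `M ẍ + D ẋ + L x = 0` with `M, D` positive diagonal and `L` symmetric PSD with
kernel spanned by the all-ones vector, every eigenvalue of the first-order system matrix
`J = [[0, I], [-M⁻¹L, -M⁻¹D]]` is either `0` (a simple translational mode) or has strictly
negative real part. -/
theorem lossless_small_signal_stability
    {n : ℕ} (L : Matrix (Fin n) (Fin n) ℝ) (d m : Fin n → ℝ)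
    (hL : L.PosSemidef)
    (hker : ∀ v : Fin n → ℝ, L *ᵥ v = 0 ↔ ∃ c : ℝ, v = fun _ => c)
    (hd : ∀ i, 0 < d i) (hm : ∀ i, 0 < m i) :
    let J : Matrix (Fin n ⊕ Fin n) (Fin n ⊕ Fin n) ℝ :=
      Matrix.fromBlocks 0 1 (-((Matrix.diagonal m)⁻¹ * L))
        (-((Matrix.diagonal m)⁻¹ * Matrix.diagonal d))
    (∀ lam : ℂ, (∃ v : (Fin n ⊕ Fin n) → ℂ, v ≠ 0 ∧
        (J.map Complex.ofReal) *ᵥ v = lam • v) → lam = 0 ∨ lam.re < 0) ∧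
    (∀ x : (Fin n ⊕ Fin n) → ℝ, J *ᵥ x = 0 →
        ∃ c : ℝ, x = Sum.elim (fun _ => c) (fun _ => (0 : ℝ))) := by
  intro J
  have hM : diagonal m * (diagonal m)⁻¹ = 1 :=
    mul_nonsing_inv _ (by simp [det_diagonal, Finset.prod_ne_zero_iff, (hm _).ne'])
  refine ⟨?_, ?_⟩
  · rintro μ ⟨v, hv, hμ⟩
    obtain ⟨x, y, rfl⟩ : ∃ x y, v = Sum.elim x y := ⟨_, _, (Sum.elim_comp_inl_inr v).symm⟩
    have hJ : J.map Complex.ofReal = fromBlocks 0 1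
        (-((diagonal m)⁻¹.map Complex.ofRealHom * L.map Complex.ofRealHom))
        (-((diagonal m)⁻¹.map Complex.ofRealHom * (diagonal d).map Complex.ofRealHom)) := by
      change J.map Complex.ofRealHom = _
      simp [J, fromBlocks_map, Matrix.map_neg, Matrix.map_mul]
    have hM' : (diagonal m).map Complex.ofRealHom * (diagonal m)⁻¹.map Complex.ofRealHom = 1 := by
      rw [← Matrix.map_mul, hM, Matrix.map_one _ (map_zero _) (map_one _)]
    obtain ⟨rfl, hquad⟩ := Matrix.fromBlocks_companion_eigenvector hM' (hJ ▸ hμ)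
    have hx : x ≠ 0 := by
      rintro rfl
      simp at hv
    refine eq_zero_or_re_neg_of_quadratic_eigenvector hL.map_ofReal ?_ ?_ hx hquad <;>
      simp [diagonal_map, hd, hm]
  · intro v hx
    obtain ⟨x, y, rfl⟩ : ∃ x y, v = Sum.elim x y := ⟨_, _, (Sum.elim_comp_inl_inr v).symm⟩
    obtain ⟨hy, hLx⟩ :=
      Matrix.fromBlocks_companion_eigenvector hM (hx.trans (zero_smul ℝ _).symm)
    simp only [zero_smul, zero_pow two_ne_zero, add_zero] at hy hLx
    obtain ⟨c, hc⟩ := (hker _).1 hLx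
    exact ⟨c, by rw [hc, hy]; rfl⟩
end
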